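/- arXiv:math/0612091 — 4 statements merged into one kernel-verified Lean document; each statement's English description precedes it below -/
import Mathlib

section
/- Let R₁, …, Rₙ be rings (or, more generally, monoids), let R = R₁ × ⋯ × Rₙ, and let u = (u₁,…,uₙ) and v = (v₁,…,vₙ) be units of R. Then (u, v) is a free pair if and only if (u_i, v_i) is a free pair for some i ∈ {1,…,n}. -/
/-!
The kernels of the coordinate maps `FreeGroup Bool →* (M i)ˣ` are normal subgroups whose
intersection is the kernel of the map into the product, so it suffices that finitely many
nontrivial normal subgroups of a free group meet nontrivially. For two of them, `A` and `B`, with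
`A ⊓ B = ⊥`, nontrivial `a ∈ A` and `b ∈ B` commute; by Nielsen–Schreier they generate a free
abelian, hence cyclic, group, so some nontrivial power of `a` is a power of `b`, and it lies in
`A ⊓ B`.
-/

/-- `u` and `v` form a free pair. -/
def IsFreePair {G : Type*} [Group G] (u v : G) : Prop :=
  Function.Injective ((FreeGroup.lift (fun b : Bool => if b then u else v)) : FreeGroup Bool →* G)

namespace IsFreeGroup

variable {G : Type*} [Group G] [IsFreeGroup G]

theorem subsingleton_generators [IsMulCommutative G] : Subsingleton (Generators G) := by
  classical
  refine ⟨fun s t => by_contra fun hst => ?_⟩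
  let f : G →* Equiv.Perm (Fin 3) :=
    lift fun x => if x = s then Equiv.swap 0 1 else if x = t then Equiv.swap 1 2 else 1
  have hcomm := congrArg f (mul_comm' (of s) (of t))
  simp only [map_mul, f, lift_of, if_pos, if_neg (Ne.symm hst)] at hcomm
  exact absurd hcomm (by decide)

theorem exists_injective_multiplicative_int [IsMulCommutative G] :
    ∃ f : G →* Multiplicative ℤ, Function.Injective f := by
  have := subsingleton_generators (G := G)
  cases isEmpty_or_nonempty (Generators G) with
  | inl _ =>
    refine ⟨1, fun x y _ => ?_⟩
    have hid : MonoidHom.id G = 1 := ext_hom isEmptyElim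
    exact (DFunLike.congr_fun hid x).trans (DFunLike.congr_fun hid y).symm
  | inr hne =>
    obtain ⟨s₀⟩ := hne
    let f : G →* Multiplicative ℤ := lift fun _ => Multiplicative.ofAdd 1
    have hinv : (zpowersHom G (of s₀)).comp f = MonoidHom.id G :=
      ext_hom fun s => by simp [f, Subsingleton.elim s s₀]
    exact ⟨f, Function.LeftInverse.injective (g := zpowersHom G (of s₀))
      (DFunLike.congr_fun hinv)⟩

theorem exists_zpow_eq_zpow_ne_one_of_commute {a b : G} (ha : a ≠ 1) (hb : b ≠ 1)
    (hab : Commute a b) : ∃ m n : ℤ, a ^ m = b ^ n ∧ a ^ m ≠ 1 := by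
  -- `K` is free by Nielsen–Schreier (`subgroupIsFreeOfIsFree`)
  let K := Subgroup.closure {a, b}
  have : IsMulCommutative K := Subgroup.isMulCommutative_closure <| by
    rintro x (rfl | rfl) y (rfl | rfl)
    exacts [rfl, hab.eq, hab.symm.eq, rfl]
  obtain ⟨f, hf⟩ := exists_injective_multiplicative_int (G := K)
  let a' : K := ⟨a, Subgroup.subset_closure (by simp)⟩
  let b' : K := ⟨b, Subgroup.subset_closure (by simp)⟩
  have hfa : (f a').toAdd ≠ 0 := fun h =>
    ha (congrArg Subtype.val (hf (h.trans (map_one f).symm)))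
  have hfb : (f b').toAdd ≠ 0 := fun h =>
    hb (congrArg Subtype.val (hf (h.trans (map_one f).symm)))
  refine ⟨(f b').toAdd, (f a').toAdd, congrArg Subtype.val
    (hf (a₁ := a' ^ (f b').toAdd) (a₂ := b' ^ (f a').toAdd) ?_), fun h => ?_⟩
  · apply Multiplicative.toAdd.injective
    simp only [map_zpow, toAdd_zpow, smul_eq_mul, mul_comm]
  · have h' : f (a' ^ (f b').toAdd) = 1 := by
      rw [Subtype.ext (a1 := a' ^ (f b').toAdd) (a2 := 1) h, map_one]
    rw [map_zpow, ← toAdd_eq_zero, toAdd_zpow, smul_eq_mul] at h'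
    exact mul_ne_zero hfb hfa h'

theorem inf_ne_bot_of_normal {A B : Subgroup G} [A.Normal] [B.Normal] (hA : A ≠ ⊥)
    (hB : B ≠ ⊥) : A ⊓ B ≠ ⊥ := by
  intro hAB
  obtain ⟨a, haA, ha⟩ := (Subgroup.bot_or_exists_ne_one A).resolve_left hA
  obtain ⟨b, hbB, hb⟩ := (Subgroup.bot_or_exists_ne_one B).resolve_left hB
  have hab : Commute a b := Subgroup.commute_of_normal_of_disjoint A B ‹_› ‹_›
    (disjoint_iff.mpr hAB) a b haA hbB
  obtain ⟨m, n, hmn, hm⟩ := exists_zpow_eq_zpow_ne_one_of_commute ha hb hab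
  have : a ^ m ∈ A ⊓ B := ⟨zpow_mem haA m, hmn ▸ zpow_mem hbB n⟩
  exact hm (by rwa [hAB, Subgroup.mem_bot] at this)

theorem iInf_eq_bot_iff_of_normal [Nontrivial G] {ι : Type*} [Finite ι] (N : ι → Subgroup G)
    [∀ i, (N i).Normal] : ⨅ i, N i = ⊥ ↔ ∃ i, N i = ⊥ := by
  refine ⟨fun h => ?_, fun ⟨i, hi⟩ => eq_bot_mono (iInf_le N i) hi⟩
  by_contra! hN
  have := Fintype.ofFinite ι
  have : (Finset.univ.inf N).Normal ∧ Finset.univ.inf N ≠ ⊥ :=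
    Finset.inf_induction (f := N) (p := fun H => H.Normal ∧ H ≠ ⊥)
      ⟨Subgroup.normal_top, top_ne_bot⟩
      (fun A ⟨_, hA⟩ B ⟨_, hB⟩ => ⟨Subgroup.normal_inf_normal A B, inf_ne_bot_of_normal hA hB⟩)
      (fun i _ => ⟨inferInstance, hN i⟩)
  exact this.2 (by rwa [Finset.inf_univ_eq_iInf])

end IsFreeGroup

abbrev freePairHom {G : Type*} [Group G] (u v : G) : FreeGroup Bool →* G :=
  FreeGroup.lift fun b => if b then u else v

theorem isFreePair_iff_ker_eq_bot {G : Type*} [Group G] (u v : G) :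
    IsFreePair u v ↔ (freePairHom u v).ker = ⊥ :=
  (MonoidHom.ker_eq_bot_iff _).symm

theorem MonoidHom.comp_freePairHom {G H : Type*} [Group G] [Group H] (f : G →* H) (u v : G) :
    f.comp (freePairHom u v) = freePairHom (f u) (f v) :=
  FreeGroup.ext_hom _ _ fun b => by cases b <;> simp

theorem MonoidHom.ker_eq_iInf_ker_units_map_eval {G ι : Type*} [Group G] {M : ι → Type*}
    [∀ i, Monoid (M i)] (φ : G →* (∀ i, M i)ˣ) :
    φ.ker = ⨅ i, ((Units.map (Pi.evalMonoidHom M i)).comp φ).ker := by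
  ext x
  simp only [MonoidHom.mem_ker, Subgroup.mem_iInf, MonoidHom.comp_apply, Units.ext_iff, funext_iff,
    Units.coe_map, Pi.evalMonoidHom_apply, Units.val_one, Pi.one_apply]

/-- **Lemma (Lemma 2.2).** Let `R = R₁ × ⋯ × Rₙ` be a finite product of monoids and
`u = (u₁, …, uₙ)`, `v = (v₁, …, vₙ)` units of `R`. Then `(u, v)` is a free pair if and
only if `(uᵢ, vᵢ)` is a free pair for some `i`. -/
theorem free_pair_pi_iff (n : ℕ) (M : Fin n → Type*) [∀ i, Monoid (M i)]
    (u v : (∀ i, M i)ˣ) :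
    IsFreePair u v ↔
      ∃ i : Fin n, IsFreePair (Units.map (Pi.evalMonoidHom M i) u)
        (Units.map (Pi.evalMonoidHom M i) v) := by
  simp only [isFreePair_iff_ker_eq_bot, MonoidHom.ker_eq_iInf_ker_units_map_eval,
    MonoidHom.comp_freePairHom]
  exact IsFreeGroup.iInf_eq_bot_iff_of_normal _
end

section
/- Let m be a positive integer and suppose a, b ∈ M_m(ℂ) satisfy a² = b² = 0 and the ℂ-subalgebra generated by a and b is all of M_m(ℂ) (i.e. ℂ[a,b] = M_m(ℂ)). Then m ≤ 2. Furthermore, m = 1 if and only if a·b is nilpotent. -/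
/-!
Since `a² = b² = 0`, the anticommutator `ab + ba` commutes with `a` and `b`, so it is central,
i.e. a scalar `l`. Then `ba = l - ab`, `a(ab) = (ab)b = 0`, `b(ab) = l b`, so the span of
`1, a, b, ab` is stable under left multiplication by the generators and is the whole algebra;
hence `m² ≤ 4`. If `ab` is nilpotent then so is `ba`, and `ab`, `ba` commute (both products
vanish), so `l = ab + ba` is nilpotent, i.e. `l = 0`. Now `ab` is central and nilpotent, hence
`0`, and then `a` and `b` are central and nilpotent, hence `0`: the algebra is `ℂ` and `m = 1`.
-/

open Module Submodule

lemma isNilpotent_mul_comm {R : Type*} [MonoidWithZero R] {x y : R}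
    (h : IsNilpotent (x * y)) : IsNilpotent (y * x) := by
  obtain ⟨n, hn⟩ := h
  exact ⟨n + 1, by rw [pow_succ', mul_assoc, ← mul_pow_mul, hn, zero_mul, mul_zero]⟩

section

variable {K A : Type*} [Field K] [Ring A] [Algebra K A] {a b : A}

lemma commute_mul_add_mul_of_mul_self_eq_zero (ha : a * a = 0) (b : A) :
    Commute (a * b + b * a) a := by
  rw [Commute, SemiconjBy, add_mul, mul_add, mul_assoc b, ha, ← mul_assoc a a, ha,
    mul_zero, zero_mul, add_zero, zero_add, mul_assoc]

lemma mem_center_of_commute_of_adjoin_eq_top (hgen : Algebra.adjoin K {a, b} = ⊤) {x : A}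
    (hxa : Commute x a) (hxb : Commute x b) : x ∈ Subalgebra.center K A := by
  have hcent : Subalgebra.centralizer K {x} = ⊤ := by
    rw [← top_le_iff, ← hgen, Algebra.adjoin_le_iff]
    rintro y (rfl | rfl) <;> rw [SetLike.mem_coe, Subalgebra.mem_centralizer_iff] <;>
      rintro g rfl <;> assumption
  exact (Subalgebra.centralizer_eq_top_iff_subset K).mp hcent rfl

lemma exists_mul_add_mul_eq_algebraMap [Algebra.IsCentral K A] (ha : a * a = 0)
    (hb : b * b = 0) (hgen : Algebra.adjoin K {a, b} = ⊤) :
    ∃ l : K, a * b + b * a = algebraMap K A l :=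
  (Algebra.IsCentral.mem_center_iff K).mp <| mem_center_of_commute_of_adjoin_eq_top hgen
    (commute_mul_add_mul_of_mul_self_eq_zero ha b)
    (add_comm (b * a) (a * b) ▸ commute_mul_add_mul_of_mul_self_eq_zero hb a)

lemma eq_zero_of_isNilpotent_of_mem_center [Algebra.IsCentral K A] [Nontrivial A] {x : A}
    (hx : x ∈ Subalgebra.center K A) (hnil : IsNilpotent x) : x = 0 := by
  obtain ⟨c, rfl⟩ := (Algebra.IsCentral.mem_center_iff K).mp hx
  rw [IsNilpotent.map_iff (algebraMap K A).injective] at hnil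
  rw [hnil.eq_zero, map_zero]

lemma eq_zero_of_isNilpotent_of_commute [Algebra.IsCentral K A] [Nontrivial A]
    (hgen : Algebra.adjoin K {a, b} = ⊤) {x : A} (hxa : Commute x a) (hxb : Commute x b)
    (hnil : IsNilpotent x) : x = 0 :=
  eq_zero_of_isNilpotent_of_mem_center (mem_center_of_commute_of_adjoin_eq_top hgen hxa hxb) hnil

lemma mul_mem_of_mem_adjoin {s : Set A} {S : Submodule K A}
    (hs : ∀ x ∈ s, ∀ y ∈ S, x * y ∈ S) {x : A} (hx : x ∈ Algebra.adjoin K s) {y : A}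
    (hy : y ∈ S) : x * y ∈ S := by
  induction hx using Algebra.adjoin_induction generalizing y with
  | mem x hx => exact hs x hx y hy
  | algebraMap r => simpa [Algebra.algebraMap_eq_smul_one] using S.smul_mem r hy
  | add x z _ _ hx hz => simpa [add_mul] using S.add_mem (hx hy) (hz hy)
  | mul x z _ _ hx hz => simpa [mul_assoc] using hx (hz hy)

lemma span_eq_top_of_mul_add_mul_eq_algebraMap (ha : a * a = 0) (hb : b * b = 0) {l : K}
    (hl : a * b + b * a = algebraMap K A l) (hgen : Algebra.adjoin K {a, b} = ⊤) :
    span K ({1, a, b, a * b} : Set A) = ⊤ := by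
  set S := span K ({1, a, b, a * b} : Set A)
  have hone : (1 : A) ∈ S := subset_span (by simp)
  have hA : a ∈ S := subset_span (by simp)
  have hB : b ∈ S := subset_span (by simp)
  have hAB : a * b ∈ S := subset_span (by simp)
  have hL : algebraMap K A l ∈ S := by
    simpa [Algebra.algebraMap_eq_smul_one] using S.smul_mem l hone
  have hba : b * a = algebraMap K A l - a * b := eq_sub_of_add_eq' hl
  have hstable : ∀ x ∈ ({a, b} : Set A), S ≤ S.comap (LinearMap.mulLeft K x) := by
    rintro x (rfl | rfl) <;>
      simp only [S, span_le, Set.insert_subset_iff, Set.singleton_subset_iff, SetLike.mem_coe,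
        mem_comap, LinearMap.mulLeft_apply]
    · exact ⟨by simpa using hA, by simp [ha], hAB, by simp [← mul_assoc, ha]⟩
    · refine ⟨by simpa using hB, hba ▸ S.sub_mem hL hAB, by simp [hb], ?_⟩
      rw [← mul_assoc, hba, sub_mul, mul_assoc, hb, mul_zero, sub_zero,
        Algebra.algebraMap_eq_smul_one, smul_one_mul]
      exact S.smul_mem l hB
  refine eq_top_iff'.mpr fun x => ?_
  simpa using mul_mem_of_mem_adjoin (fun x hx _ hy => hstable x hx hy)
    (hgen ▸ Algebra.mem_top : x ∈ Algebra.adjoin K {a, b}) hone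

lemma finrank_le_four_of_adjoin_eq_top [Algebra.IsCentral K A] (ha : a * a = 0)
    (hb : b * b = 0) (hgen : Algebra.adjoin K {a, b} = ⊤) : finrank K A ≤ 4 := by
  classical
  obtain ⟨l, hl⟩ := exists_mul_add_mul_eq_algebraMap ha hb hgen
  calc finrank K A = finrank K (span K (({1, a, b, a * b} : Finset A) : Set A)) := by
        rw [Finset.coe_insert, Finset.coe_insert, Finset.coe_pair,
          span_eq_top_of_mul_add_mul_eq_algebraMap ha hb hl hgen, finrank_top]
    _ ≤ 4 := (finrank_span_finset_le_card _).trans Finset.card_le_four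

lemma eq_zero_of_isNilpotent_mul [Algebra.IsCentral K A] [Nontrivial A] (ha : a * a = 0)
    (hb : b * b = 0) (hgen : Algebra.adjoin K {a, b} = ⊤) (hnil : IsNilpotent (a * b)) :
    a = 0 ∧ b = 0 := by
  obtain ⟨l, hl⟩ := exists_mul_add_mul_eq_algebraMap ha hb hgen
  have hcomm : Commute (a * b) (b * a) := by
    simp only [Commute, SemiconjBy, mul_assoc]
    rw [← mul_assoc b b, hb, ← mul_assoc a a, ha]
    simp
  have hl0 : l = 0 := by
    have := hl ▸ hcomm.isNilpotent_add hnil (isNilpotent_mul_comm hnil)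
    exact ((IsNilpotent.map_iff (algebraMap K A).injective).mp this).eq_zero
  have hba : b * a = -(a * b) := by
    rw [← sub_eq_zero, sub_neg_eq_add, add_comm, hl, hl0, map_zero]
  have hab0 : a * b = 0 := by
    refine eq_zero_of_isNilpotent_of_commute hgen ?_ ?_ hnil
    · rw [Commute, SemiconjBy, mul_assoc, hba, ← mul_assoc a a, ha]; simp [← mul_assoc, ha]
    · rw [Commute, SemiconjBy, mul_assoc, hb, ← mul_assoc, hba]; simp [mul_assoc, hb]
  have hcomm_ab : Commute a b := by rw [Commute, SemiconjBy, hba, hab0, neg_zero]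
  exact ⟨eq_zero_of_isNilpotent_of_commute hgen (.refl a) hcomm_ab ⟨2, by rw [sq, ha]⟩,
    eq_zero_of_isNilpotent_of_commute hgen hcomm_ab.symm (.refl b) ⟨2, by rw [sq, hb]⟩⟩

lemma finrank_eq_one_iff_isNilpotent_mul [Algebra.IsCentral K A] [Nontrivial A]
    (ha : a * a = 0) (hb : b * b = 0) (hgen : Algebra.adjoin K {a, b} = ⊤) :
    finrank K A = 1 ↔ IsNilpotent (a * b) := by
  constructor
  · intro h
    have ha_center : a ∈ Subalgebra.center K A := by
      rw [Algebra.IsCentral.center_eq_bot, Subalgebra.bot_eq_top_of_finrank_eq_one h]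
      exact Algebra.mem_top
    rw [eq_zero_of_isNilpotent_of_mem_center ha_center ⟨2, by rw [sq, ha]⟩, zero_mul]
    exact IsNilpotent.zero
  · intro hnil
    obtain ⟨rfl, rfl⟩ := eq_zero_of_isNilpotent_mul ha hb hgen hnil
    rw [← Subalgebra.bot_eq_top_iff_finrank_eq_one, ← hgen]
    simp

end

/-- **Lemma (Lemma 2.3).** If `a, b ∈ M_m(ℂ)` satisfy `a² = b² = 0` and the unital
`ℂ`-subalgebra generated by `a` and `b` is all of `M_m(ℂ)`, then `m ≤ 2`; moreover
`m = 1` if and only if `ab` is nilpotent. -/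
theorem dim_le_two_of_generated_by_square_zero (m : ℕ) (hm : 0 < m)
    (a b : Matrix (Fin m) (Fin m) ℂ) (ha : a ^ 2 = 0) (hb : b ^ 2 = 0)
    (hgen : Algebra.adjoin ℂ ({a, b} : Set (Matrix (Fin m) (Fin m) ℂ)) = ⊤) :
    m ≤ 2 ∧ (m = 1 ↔ IsNilpotent (a * b)) := by
  have : Nonempty (Fin m) := ⟨⟨0, hm⟩⟩
  rw [sq] at ha hb
  have hfinrank : finrank ℂ (Matrix (Fin m) (Fin m) ℂ) = m * m := by simp [finrank_matrix]
  constructor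
  · rw [← Nat.mul_self_le_mul_self_iff, ← hfinrank]
    exact finrank_le_four_of_adjoin_eq_top ha hb hgen
  · rw [← finrank_eq_one_iff_isNilpotent_mul ha hb hgen, hfinrank, Nat.mul_self_inj (n := 1)]
end

section
/- Let R be a ring of characteristic 0 and let a, b ∈ R with a² = b² = 0. Then a·b is nilpotent if and only if the subgroup ⟨1+a, 1+b⟩ of the unit group of R is a nilpotent group. -/
/-!
If `(ab)ⁿ = 0`, the `ℤ`-span `I` of `a, b` is nilpotent, since `I² ≤ ℤab + ℤba` and
`ab · ba = ba · ab = 0`. The unit groups `Uₖ = {u | u - 1, u⁻¹ - 1 ∈ Iᵏ + Iᵏ⁺¹ + ⋯}` satisfy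
`⁅Uᵢ, Uⱼ⁆ ≤ Uᵢ₊ⱼ` and vanish for large `k`, and `⟨1 + a, 1 + b⟩ ≤ U₁`.

Conversely, let `g₀ = 1 + b` and `gₙ₊₁ = ⁅gₙ, 1 + a⁆`; in a nilpotent group `gₙ = 1` for large `n`.
Since `a ⁅g, 1 + a⁆ a = a g a g⁻¹ a = -(a ⁅g, 1 + a⁆⁻¹ a)`, induction gives `a gₙ a = ±(ab)ᵐ a`
for some `m`, and at `gₙ = 1` the left side is `a² = 0`.
-/

open Submodule
open scoped commutatorElement

theorem Group.IsNilpotent.exists_iterate_commutator_eq_one {G : Type*} [Group G]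
    [Group.IsNilpotent G] (x y : G) : ∃ n, (⁅·, x⁆)^[n] y = 1 := by
  obtain ⟨n, hn⟩ := Subgroup.nilpotent_iff_lowerCentralSeries.mp ‹_›
  have hmem (k : ℕ) : (⁅·, x⁆)^[k] y ∈ (⊤ : Subgroup G).lowerCentralSeries k := by
    induction k with
    | zero => exact Subgroup.mem_top y
    | succ k ih =>
      rw [Function.iterate_succ_apply', Subgroup.lowerCentralSeries_succ]
      exact Subgroup.commutator_mem_commutator ih (Subgroup.mem_top x)
  exact ⟨n, by simpa [hn] using hmem n⟩

section Ring

variable {R : Type*} [Ring R]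

section SpanPair

variable {x y : R}

lemma span_pair_pow_succ_le (hxy : x * y = 0) (hyx : y * x = 0) (k : ℕ) :
    span ℤ {x, y} ^ (k + 1) ≤ span ℤ {x ^ (k + 1), y ^ (k + 1)} := by
  induction k with
  | zero => simp
  | succ k ih =>
    have hxy' : x ^ (k + 1) * y = 0 := by rw [pow_succ, mul_assoc, hxy, mul_zero]
    have hyx' : y ^ (k + 1) * x = 0 := by rw [pow_succ, mul_assoc, hyx, mul_zero]
    calc span ℤ {x, y} ^ (k + 1 + 1) ≤ span ℤ {x ^ (k + 1), y ^ (k + 1)} * span ℤ {x, y} := by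
          rw [pow_succ]; exact mul_le_mul_left ih _
      _ ≤ span ℤ {x ^ (k + 1 + 1), y ^ (k + 1 + 1)} := by
          rw [span_mul_span, span_le, Set.mul_subset_iff]
          rintro _ (rfl | rfl) _ (rfl | rfl) <;> simp [← pow_succ, hxy', hyx', mem_span_of_mem]

lemma isNilpotent_span_pair_of_mul_eq_zero (hxy : x * y = 0) (hyx : y * x = 0)
    (hx : IsNilpotent x) (hy : IsNilpotent y) : IsNilpotent (span ℤ {x, y}) := by
  obtain ⟨n, hn⟩ := hx
  obtain ⟨m, hm⟩ := hy
  refine ⟨n + m + 1, le_bot_iff.mp ((span_pair_pow_succ_le hxy hyx _).trans ?_)⟩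
  rw [pow_eq_zero_of_le (by omega) hn, pow_eq_zero_of_le (by omega) hm]
  simp

lemma span_pair_sq_le (hx : x * x = 0) (hy : y * y = 0) :
    span ℤ {x, y} ^ 2 ≤ span ℤ {x * y, y * x} := by
  rw [sq, span_mul_span, span_le, Set.mul_subset_iff]
  rintro _ (rfl | rfl) _ (rfl | rfl) <;> simp [hx, hy, mem_span_of_mem]

lemma isNilpotent_span_pair_of_mul_self_eq_zero (hx : x * x = 0) (hy : y * y = 0)
    (h : IsNilpotent (x * y)) : IsNilpotent (span ℤ {x, y}) := by
  have hyx : IsNilpotent (y * x) := by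
    obtain ⟨n, hn⟩ := h
    exact ⟨n + 1, by rw [pow_succ', mul_assoc, ← mul_pow_mul, hn, zero_mul, mul_zero]⟩
  obtain ⟨n, hn⟩ := isNilpotent_span_pair_of_mul_eq_zero
    (by rw [mul_assoc, ← mul_assoc y, hy, zero_mul, mul_zero])
    (by rw [mul_assoc, ← mul_assoc x, hx, zero_mul, mul_zero]) h hyx
  refine ⟨2 * n, le_bot_iff.mp ?_⟩
  rw [pow_mul]
  exact (pow_le_pow_left' (span_pair_sq_le hx hy) n).trans hn.le

end SpanPair

lemma Units.val_inv_eq_one_sub {a : R} {α : Rˣ} (ha : a * a = 0) (hα : (α : R) = 1 + a) :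
    ((α⁻¹ : Rˣ) : R) = 1 - a :=
  Units.inv_eq_of_mul_eq_one_right (by simp [hα, add_mul, mul_sub, ha])

section PowFiltration

variable (I : Submodule ℤ R)

def powFiltration (k : ℕ) : Submodule ℤ R := ⨆ j, I ^ (k + j)

variable {I}

lemma pow_le_powFiltration {k n : ℕ} (h : k ≤ n) : I ^ n ≤ powFiltration I k :=
  le_iSup_of_le (n - k) (by rw [Nat.add_sub_cancel' h])

lemma powFiltration_antitone : Antitone (powFiltration I) := fun _ _ h =>
  iSup_le fun _ => pow_le_powFiltration (by omega)

lemma powFiltration_mul_le (i j : ℕ) :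
    powFiltration I i * powFiltration I j ≤ powFiltration I (i + j) := by
  simp only [powFiltration, iSup_mul, mul_iSup, ← pow_add]
  exact iSup_le fun _ => iSup_le fun _ => pow_le_powFiltration (by omega)

lemma powFiltration_eq_bot {m k : ℕ} (h : I ^ m = 0) (hk : m ≤ k) : powFiltration I k = ⊥ :=
  iSup_eq_bot.mpr fun j => by
    rw [← Nat.add_sub_cancel' (hk.trans (Nat.le_add_right k j)), pow_add, h, zero_mul, zero_eq_bot]

lemma mul_sub_one_mem_powFiltration {k : ℕ} {x y : R} (hx : x - 1 ∈ powFiltration I k)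
    (hy : y - 1 ∈ powFiltration I k) : x * y - 1 ∈ powFiltration I k := by
  have hxy : x * y - 1 = (x - 1) * (y - 1) + (x - 1) + (y - 1) := by noncomm_ring
  rw [hxy]
  refine add_mem (add_mem ?_ hx) hy
  exact powFiltration_antitone (by omega) (powFiltration_mul_le k k (mul_mem_mul hx hy))

variable (I) in
def congruenceUnits (k : ℕ) : Subgroup Rˣ where
  carrier := {u | (u : R) - 1 ∈ powFiltration I k ∧ ((u⁻¹ : Rˣ) : R) - 1 ∈ powFiltration I k}
  one_mem' := by simp
  mul_mem' := fun ⟨hu, hu'⟩ ⟨hv, hv'⟩ =>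
    ⟨by simpa using mul_sub_one_mem_powFiltration hu hv,
      by simpa using mul_sub_one_mem_powFiltration hv' hu'⟩
  inv_mem' := fun ⟨hu, hu'⟩ => ⟨hu', by simpa using hu⟩

lemma mem_congruenceUnits_one {a : R} {α : Rˣ} (ha : a * a = 0) (hα : (α : R) = 1 + a)
    (haI : a ∈ I) : α ∈ congruenceUnits I 1 := by
  have hle : I ≤ powFiltration I 1 := by
    simpa using pow_le_powFiltration (I := I) (le_refl 1)
  refine ⟨?_, ?_⟩
  · rw [hα, add_sub_cancel_left]
    exact hle haI
  · rw [Units.val_inv_eq_one_sub ha hα, sub_sub_cancel_left]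
    exact neg_mem (hle haI)

lemma val_commutator_sub_one_mem {i j : ℕ} {u v : Rˣ} (hu : u ∈ congruenceUnits I i)
    (hv : v ∈ congruenceUnits I j) : ((⁅u, v⁆ : Rˣ) : R) - 1 ∈ powFiltration I (i + j) := by
  set D : R := (u - 1) * (v - 1) - (v - 1) * (u - 1)
  have hD : D ∈ powFiltration I (i + j) :=
    sub_mem (powFiltration_mul_le i j (mul_mem_mul hu.1 hv.1))
      (add_comm i j ▸ powFiltration_mul_le j i (mul_mem_mul hv.1 hu.1))
  have hw : ((u⁻¹ * v⁻¹ : Rˣ) : R) - 1 ∈ powFiltration I 0 :=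
    mul_sub_one_mem_powFiltration (powFiltration_antitone (Nat.zero_le i) hu.2)
      (powFiltration_antitone (Nat.zero_le j) hv.2)
  have hvu : (v : R) * u * (↑u⁻¹ * ↑v⁻¹) = 1 := by simp [mul_assoc]
  have key : ((⁅u, v⁆ : Rˣ) : R) - 1 = D + D * (((u⁻¹ * v⁻¹ : Rˣ) : R) - 1) :=
    calc ((⁅u, v⁆ : Rˣ) : R) - 1 = u * v * (↑u⁻¹ * ↑v⁻¹) - v * u * (↑u⁻¹ * ↑v⁻¹) := by
          rw [hvu, commutatorElement_def]; simp [mul_assoc]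
      _ = D + D * (((u⁻¹ * v⁻¹ : Rˣ) : R) - 1) := by push_cast; simp only [D]; noncomm_ring
  rw [key]
  exact add_mem hD (powFiltration_mul_le (i + j) 0 (mul_mem_mul hD hw))

lemma commutator_mem_congruenceUnits {i j : ℕ} {u v : Rˣ} (hu : u ∈ congruenceUnits I i)
    (hv : v ∈ congruenceUnits I j) : ⁅u, v⁆ ∈ congruenceUnits I (i + j) :=
  ⟨val_commutator_sub_one_mem hu hv, by
    rw [commutatorElement_inv, add_comm]; exact val_commutator_sub_one_mem hv hu⟩

lemma congruenceUnits_eq_bot {m k : ℕ} (h : I ^ m = 0) (hk : m ≤ k) :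
    congruenceUnits I k = ⊥ := by
  refine eq_bot_iff.mpr fun u hu => ?_
  have hu1 := hu.1
  rw [powFiltration_eq_bot h hk, mem_bot, sub_eq_zero] at hu1
  exact Units.ext hu1

theorem isNilpotent_of_le_congruenceUnits {G : Subgroup Rˣ} (hI : IsNilpotent I)
    (hG : G ≤ congruenceUnits I 1) : Group.IsNilpotent G := by
  obtain ⟨m, hm⟩ := hI
  rw [Subgroup.nilpotent_iff_finite_descending_central_series]
  refine ⟨m, fun k => (congruenceUnits I (k + 1)).subgroupOf G, ⟨?_, ?_⟩, ?_⟩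
  · exact Subgroup.subgroupOf_eq_top.mpr hG
  · intro x n hx g
    exact commutator_mem_congruenceUnits hx (hG g.2)
  · simp only [congruenceUnits_eq_bot hm (Nat.le_succ m), Subgroup.bot_subgroupOf]

end PowFiltration

section Sandwich

variable {a b : R} {α : Rˣ}

lemma mul_commutator_mul (ha : a * a = 0) (hα : (α : R) = 1 + a) (g : Rˣ) :
    a * ((⁅g, α⁆ : Rˣ) : R) * a = a * g * a * ↑g⁻¹ * a := by
  rw [commutatorElement_def]
  simp [Units.val_inv_eq_one_sub ha hα, hα, mul_add, add_mul, sub_mul, mul_sub, mul_assoc, ha]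

lemma mul_commutator_inv_mul (ha : a * a = 0) (hα : (α : R) = 1 + a) (g : Rˣ) :
    a * ((⁅g, α⁆⁻¹ : Rˣ) : R) * a = -(a * ((⁅g, α⁆ : Rˣ) : R) * a) := by
  have ha' (x : R) : a * (a * x) = 0 := by rw [← mul_assoc, ha, zero_mul]
  rw [commutatorElement_inv, commutatorElement_def, mul_commutator_mul ha hα]
  simp [Units.val_inv_eq_one_sub ha hα, hα, mul_add, add_mul, sub_mul, mul_sub, mul_assoc, ha, ha']

lemma mul_commutator_mul_eq_neg_pow (ha : a * a = 0) (hα : (α : R) = 1 + a) {g : Rˣ} {m : ℕ}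
    {ε : ℤˣ} (hg : a * g * a = ε • ((a * b) ^ m * a)) (hg' : a * ↑g⁻¹ * a = -(a * g * a)) :
    a * ((⁅g, α⁆ : Rˣ) : R) * a = -((a * b) ^ (2 * m) * a) :=
  calc a * ((⁅g, α⁆ : Rˣ) : R) * a = ε • ((a * b) ^ m * (a * ↑g⁻¹ * a)) := by
        rw [mul_commutator_mul ha hα, hg]; simp only [smul_mul_assoc, mul_assoc]
    _ = -((ε * ε) • ((a * b) ^ m * ((a * b) ^ m * a))) := by
        rw [hg', hg, mul_neg, mul_smul_comm, smul_neg, mul_smul]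
    _ = -((a * b) ^ (2 * m) * a) := by
        rw [Int.units_mul_self, one_smul, ← mul_assoc, ← pow_add, two_mul]

lemma exists_mul_iterate_commutator_mul (ha : a * a = 0) (hb : b * b = 0) {β : Rˣ}
    (hα : (α : R) = 1 + a) (hβ : (β : R) = 1 + b) (n : ℕ) :
    ∃ (m : ℕ) (ε : ℤˣ), a * ↑((⁅·, α⁆)^[n] β) * a = ε • ((a * b) ^ m * a) ∧
      a * ↑((⁅·, α⁆)^[n] β)⁻¹ * a = -(a * ↑((⁅·, α⁆)^[n] β) * a) := by
  induction n with
  | zero =>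
    refine ⟨1, 1, ?_, ?_⟩ <;>
      simp [Units.val_inv_eq_one_sub hb hβ, hβ, mul_add, add_mul, sub_mul, mul_sub, mul_assoc, ha]
  | succ n ih =>
    obtain ⟨m, ε, hg, hg'⟩ := ih
    rw [Function.iterate_succ_apply']
    refine ⟨2 * m, -1, ?_, mul_commutator_inv_mul ha hα _⟩
    rw [mul_commutator_mul_eq_neg_pow ha hα hg hg', Units.neg_smul, one_smul]

theorem isNilpotent_mul_of_isNilpotent_closure (ha : a * a = 0) (hb : b * b = 0) {β : Rˣ}
    (hα : (α : R) = 1 + a) (hβ : (β : R) = 1 + b)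
    [Group.IsNilpotent (Subgroup.closure {α, β})] : IsNilpotent (a * b) := by
  let A : Subgroup.closure {α, β} := ⟨α, Subgroup.subset_closure (by simp)⟩
  let B : Subgroup.closure {α, β} := ⟨β, Subgroup.subset_closure (by simp)⟩
  obtain ⟨n, hn⟩ := Group.IsNilpotent.exists_iterate_commutator_eq_one A B
  have hn' : (⁅·, α⁆)^[n] β = 1 := by
    have hsemi : Function.Semiconj Subtype.val (⁅·, A⁆) (⁅·, α⁆) := fun _ => rfl
    simpa [hn] using (hsemi.iterate_right n B).symm
  obtain ⟨m, ε, h, -⟩ := exists_mul_iterate_commutator_mul ha hb hα hβ n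
  rw [hn', Units.val_one, mul_one, ha, eq_comm, smul_eq_zero_iff_eq] at h
  exact ⟨m + 1, by rw [pow_succ, ← mul_assoc, h, zero_mul]⟩

end Sandwich

end Ring

theorem nilpotent_mul_iff_nilpotent_group_general (R : Type*) [Ring R] (a b : R)
    (ha : a ^ 2 = 0) (hb : b ^ 2 = 0)
    (α β : Rˣ) (hα : (α : R) = 1 + a) (hβ : (β : R) = 1 + b) :
    IsNilpotent (a * b) ↔ Group.IsNilpotent ↥(Subgroup.closure {α, β}) := by
  rw [sq] at ha hb
  refine ⟨fun h => isNilpotent_of_le_congruenceUnits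
      (isNilpotent_span_pair_of_mul_self_eq_zero ha hb h) ?_,
    fun _ => isNilpotent_mul_of_isNilpotent_closure ha hb hα hβ⟩
  rw [Subgroup.closure_le, Set.insert_subset_iff, Set.singleton_subset_iff]
  exact ⟨mem_congruenceUnits_one ha hα (subset_span (by simp)),
    mem_congruenceUnits_one hb hβ (subset_span (by simp))⟩

/-- **Corollary 3.1(3), first part.** Let `R` be a ring of characteristic `0` and
`a, b ∈ R` with `a² = b² = 0`. Then `ab` is nilpotent if and only if the subgroup
`⟨1 + a, 1 + b⟩` of the unit group of `R` is nilpotent. -/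
theorem nilpotent_mul_iff_nilpotent_group (R : Type*) [Ring R] [CharZero R] (a b : R)
    (ha : a ^ 2 = 0) (hb : b ^ 2 = 0)
    (α β : Rˣ) (hα : (α : R) = 1 + a) (hβ : (β : R) = 1 + b) :
    IsNilpotent (a * b) ↔ Group.IsNilpotent ↥(Subgroup.closure {α, β}) :=
  nilpotent_mul_iff_nilpotent_group_general R a b ha hb α β hα hβ
end

section
/- Let G be a finite non-abelian group that has a central element a whose order divides neither 4 nor 6. Then G has a non-central element whose order divides neither 4 nor 6. -/
/-- **Remark 7.2.** If `G` is a finite non-abelian group with a central element `a`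
whose order divides neither `4` nor `6`, then `G` has a non-central element whose
order divides neither `4` nor `6`. -/
theorem exists_noncentral_of_central (G : Type*) [Group G] [Fintype G]
    (hnab : ∃ g₁ g₂ : G, g₁ * g₂ ≠ g₂ * g₁)
    (a : G) (haC : a ∈ Subgroup.center G)
    (ha4 : ¬ orderOf a ∣ 4) (ha6 : ¬ orderOf a ∣ 6) :
    ∃ b : G, b ∉ Subgroup.center G ∧ ¬ orderOf b ∣ 4 ∧ ¬ orderOf b ∣ 6 := by
  by_contra hcon
  push_neg at hcon
  -- every noncentral element has b^4 = 1 or b^6 = 1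
  have h : ∀ b : G, b ∉ Subgroup.center G → b ^ 4 = 1 ∨ b ^ 6 = 1 := by
    intro b hb
    rcases Classical.em (orderOf b ∣ 4) with h4 | h4
    · exact Or.inl ((orderOf_dvd_iff_pow_eq_one).mp h4)
    · exact Or.inr ((orderOf_dvd_iff_pow_eq_one).mp (hcon b hb h4))
  obtain ⟨g, g₂, hne⟩ := hnab
  have hg : g ∉ Subgroup.center G := by
    intro hmem
    exact hne ((Subgroup.mem_center_iff.mp hmem) g₂).symm
  have hcom : Commute a g := ((Subgroup.mem_center_iff.mp haC) g).symm
  -- a^k * g is noncentral for all k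
  have hnc : ∀ k : ℕ, a ^ k * g ∉ Subgroup.center G := by
    intro k hmem
    apply hg
    have hak : a ^ k ∈ Subgroup.center G := Subgroup.pow_mem _ haC k
    have : (a ^ k)⁻¹ * (a ^ k * g) ∈ Subgroup.center G :=
      Subgroup.mul_mem _ (Subgroup.inv_mem _ hak) hmem
    simpa [mul_assoc] using this
  have hpow : ∀ k n : ℕ, (a ^ k * g) ^ n = a ^ (k * n) * g ^ n := by
    intro k n
    rw [(hcom.pow_left k).mul_pow, ← pow_mul]
  have h12 : ∀ k : ℕ, a ^ (k * 12) * g ^ 12 = 1 := by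
    intro k
    rw [← hpow]
    rcases h (a ^ k * g) (hnc k) with h4 | h6
    · calc (a ^ k * g) ^ 12 = ((a ^ k * g) ^ 4) ^ 3 := by rw [← pow_mul]
        _ = 1 := by rw [h4, one_pow]
    · calc (a ^ k * g) ^ 12 = ((a ^ k * g) ^ 6) ^ 2 := by rw [← pow_mul]
        _ = 1 := by rw [h6, one_pow]
  have hg12 : g ^ 12 = 1 := by simpa using h12 0
  have ha12 : a ^ 12 = 1 := by
    have := h12 1
    rw [hg12, mul_one] at this
    simpa using this
  have hO : orderOf a = 12 := by
    have hd : orderOf a ∣ 12 := orderOf_dvd_iff_pow_eq_one.mpr ha12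
    have hle : orderOf a ≤ 12 := Nat.le_of_dvd (by norm_num) hd
    have hpos : 0 < orderOf a := orderOf_pos a
    interval_cases h' : orderOf a <;> omega
  have hne1 : ∀ n : ℕ, ¬ (12 ∣ n) → a ^ n ≠ 1 := by
    intro n hn hh
    exact hn (hO ▸ orderOf_dvd_iff_pow_eq_one.mpr hh)
  -- derive contradiction: exhibit noncentral element with b^4 ≠ 1 and b^6 ≠ 1
  have key : ∀ b : G, b ∉ Subgroup.center G → b ^ 4 ≠ 1 → b ^ 6 ≠ 1 → False := by
    intro b hb h4 h6
    rcases h b hb with h' | h' <;> [exact h4 h'; exact h6 h']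
  rcases h g hg with hg4 | hg6
  · -- g^4 = 1
    rcases h (a ^ 1 * g) (hnc 1) with hag | hag <;> rw [hpow] at hag
    · -- a^4 * g^4 = 1 ⇒ a^4 = 1, contradiction
      rw [hg4, mul_one] at hag
      exact hne1 4 (by norm_num) (by simpa using hag)
    · -- a^6 * g^6 = 1; g^6 = g^2
      have hg6' : g ^ 6 = g ^ 2 := by
        calc g ^ 6 = g ^ 4 * g ^ 2 := by rw [← pow_add]
          _ = g ^ 2 := by rw [hg4, one_mul]
      rw [hg6'] at hag
      have hg2 : g ^ 2 = a ^ 6 := by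
        have hag' : a ^ 6 * g ^ 2 = 1 := by simpa using hag
        have h1 : (a ^ 6)⁻¹ = g ^ 2 := inv_eq_of_mul_eq_one_right hag'
        have h2 : a ^ 6 * a ^ 6 = 1 := by rw [← pow_add]; norm_num [ha12]
        have h3 : (a ^ 6)⁻¹ = a ^ 6 := inv_eq_of_mul_eq_one_right h2
        rw [← h1, h3]
      -- b = a^2 * g
      refine key (a ^ 2 * g) (hnc 2) ?_ ?_
      · rw [hpow, hg4, mul_one]
        exact hne1 8 (by norm_num)
      · rw [hpow, hg6', hg2, ← pow_add]
        exact hne1 18 (by norm_num)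
  · -- g^6 = 1
    rcases h (a ^ 1 * g) (hnc 1) with hag | hag <;> rw [hpow] at hag
    · -- a^4 * g^4 = 1 ⇒ g^4 = a^8
      have hg4 : g ^ 4 = a ^ 8 := by
        have hag' : a ^ 4 * g ^ 4 = 1 := by simpa using hag
        have h1 : (a ^ 4)⁻¹ = g ^ 4 := inv_eq_of_mul_eq_one_right hag'
        have h2 : a ^ 4 * a ^ 8 = 1 := by rw [← pow_add]; norm_num [ha12]
        have h3 : (a ^ 4)⁻¹ = a ^ 8 := inv_eq_of_mul_eq_one_right h2
        rw [← h1, h3]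
      -- b = a^3 * g
      refine key (a ^ 3 * g) (hnc 3) ?_ ?_
      · rw [hpow, hg4, ← pow_add]
        exact hne1 20 (by norm_num)
      · rw [hpow, hg6, mul_one]
        exact hne1 18 (by norm_num)
    · -- a^6 * g^6 = 1 ⇒ a^6 = 1
      rw [hg6, mul_one] at hag
      exact hne1 6 (by norm_num) (by simpa using hag)
end
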